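/- arXiv:1703.05112 — 2 statements merged into one kernel-verified Lean document; each statement's English description precedes it below -/
import Mathlib

section
/- Let P_G = −div(G(x)∇) be a uniformly elliptic divergence-form operator on L²(ℝ^d), and let b, w ∈ L^∞(ℝ^d) with b ≥ 0 and w ≥ w_min > 0. For z = τ + iμ ∈ ℂ with μ > 0, the operator T(z) = P_G − i z b − z² w is boundedly invertible on L²(ℝ^d), and there is a constant C (independent of z) such that ‖T(z)⁻¹‖_{L²→L²} ≤ C/(μ|z|). -/
/-- `S` is a bounded (everywhere-defined) inverse of the unbounded operator `T`
with domain `D`. -/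
def IsBoundedInverseOf {K : Type*} [NormedAddCommGroup K] [NormedSpace ℂ K]
    (D : Submodule ℂ K) (T : ↥D →ₗ[ℂ] K) (S : K →L[ℂ] K) : Prop :=
  (∀ y : K, S y ∈ D) ∧ (∀ (y : K) (h : S y ∈ D), T ⟨S y, h⟩ = y) ∧
    (∀ φ : ↥D, S (T φ) = (φ : K))

/-!
For `Im z > 0` and `φ` in the domain, `Im (z ⟪T(z) φ, φ⟫) = Im z ⟪P φ, φ⟫ + |z|² ⟪B φ, φ⟫
+ Im z |z|² ⟪W φ, φ⟫ ≥ w_min Im z |z|² ‖φ‖²`, hence `‖T(z) φ‖ ≥ w_min Im z |z| ‖φ‖`: this gives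
injectivity and the bound `‖T(z)⁻¹‖ ≤ w_min⁻¹ / (Im z |z|)`. Surjectivity follows by the method of
continuity: deform `T(z)` through pencils of the same shape, all bounded below uniformly, into
`P - 2 i w_min`, which is onto since `P` is self-adjoint; a bounded perturbation of norm below the
lower bound preserves surjectivity (Neumann series), and `[0, 1]` is connected.
-/

open Complex ComplexConjugate
open scoped ComplexOrder

section BoundedInverse

variable {K : Type*} [NormedAddCommGroup K] [NormedSpace ℂ K] {D : Submodule ℂ K}

theorem exists_isBoundedInverseOf_of_surjective {A : D →ₗ[ℂ] K} {c : ℝ} (hc : 0 < c)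
    (hA : ∀ φ : D, c * ‖(φ : K)‖ ≤ ‖A φ‖) (hsurj : Function.Surjective A) :
    ∃ S : K →L[ℂ] K, IsBoundedInverseOf D A S ∧ ‖S‖ ≤ c⁻¹ := by
  have hinj : Function.Injective A := by
    refine (injective_iff_map_eq_zero A).mpr fun φ hφ => norm_le_zero_iff.mp ?_
    have := hA φ
    rw [hφ, norm_zero] at this
    exact nonpos_of_mul_nonpos_right this hc
  let e := LinearEquiv.ofBijective A ⟨hinj, hsurj⟩
  have hAe : ∀ y, A (e.symm y) = y := e.apply_symm_apply
  have hS : ∀ y, ‖(D.subtype ∘ₗ e.symm.toLinearMap) y‖ ≤ c⁻¹ * ‖y‖ := fun y => by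
    rw [le_inv_mul_iff₀ hc]
    simpa [hAe] using hA (e.symm y)
  refine ⟨(D.subtype ∘ₗ e.symm.toLinearMap).mkContinuous c⁻¹ hS,
    ⟨fun y => (e.symm y).2, fun y _ => hAe y, fun φ => ?_⟩,
    LinearMap.mkContinuous_norm_le _ (inv_nonneg.mpr hc.le) hS⟩
  exact congrArg Subtype.val (e.symm_apply_apply φ)

variable [CompleteSpace K]

theorem surjective_sub_of_norm_lt {A : D →ₗ[ℂ] K} {c : ℝ} (hc : 0 < c)
    (hA : ∀ φ : D, c * ‖(φ : K)‖ ≤ ‖A φ‖) (hsurj : Function.Surjective A)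
    {R : K →L[ℂ] K} (hR : ‖R‖ < c) :
    Function.Surjective (A - (R : K →ₗ[ℂ] K) ∘ₗ D.subtype) := by
  obtain ⟨S, ⟨hSD, hAS, -⟩, hS⟩ := exists_isBoundedInverseOf_of_surjective hc hA hsurj
  have hSR : ‖S * R‖ < 1 := calc
    ‖S * R‖ ≤ ‖S‖ * ‖R‖ := norm_mul_le S R
    _ ≤ c⁻¹ * ‖R‖ := by gcongr
    _ < 1 := by rwa [inv_mul_lt_one₀ hc]
  obtain ⟨U, hU⟩ := (isUnit_one_sub_of_norm_lt_one hSR).exists_right_inv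
  intro y
  -- Solve `x = S (y + R x)` by the Neumann series for `(1 - S R)⁻¹`.
  set x := U (S y)
  have hx : x = S (y + R x) := by
    have h : x - S (R x) = S y := by simpa using congrArg (· (S y)) hU
    rw [map_add, ← h]
    abel
  have hxD : x ∈ D := by rw [hx]; exact hSD _
  refine ⟨⟨x, hxD⟩, ?_⟩
  have := hAS (y + R x) (hx ▸ hxD)
  simp only [← hx] at this
  simp [this]

theorem IsPreconnected.surjective_sub_of_continuousOn {X : Type*} [TopologicalSpace X]
    {s : Set X} (hs : IsPreconnected s) (A : D →ₗ[ℂ] K) {R : X → K →L[ℂ] K}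
    (hR : ContinuousOn R s) {c : ℝ} (hc : 0 < c)
    (hA : ∀ x ∈ s, ∀ φ : D, c * ‖(φ : K)‖ ≤ ‖(A - (R x : K →ₗ[ℂ] K) ∘ₗ D.subtype) φ‖)
    {x y : X} (hx : x ∈ s) (hy : y ∈ s)
    (hsurj : Function.Surjective (A - (R x : K →ₗ[ℂ] K) ∘ₗ D.subtype)) :
    Function.Surjective (A - (R y : K →ₗ[ℂ] K) ∘ₗ D.subtype) := by
  have hstep : ∀ x ∈ s, ∀ y, ‖R y - R x‖ < c →
      Function.Surjective (A - (R x : K →ₗ[ℂ] K) ∘ₗ D.subtype) →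
      Function.Surjective (A - (R y : K →ₗ[ℂ] K) ∘ₗ D.subtype) := by
    intro x hx y hxy h
    convert surjective_sub_of_norm_lt hc (hA x hx) h hxy using 1
    ext φ
    simp
  refine hs.induction₂' (fun x y => Function.Surjective (A - (R x : K →ₗ[ℂ] K) ∘ₗ D.subtype) →
    Function.Surjective (A - (R y : K →ₗ[ℂ] K) ∘ₗ D.subtype)) (fun x hx => ?_)
    (fun _ _ _ _ _ _ hxy hyz => hyz ∘ hxy) hx hy hsurj
  filter_upwards [self_mem_nhdsWithin, Metric.tendsto_nhds.mp (hR x hx) c hc] with y hy hxy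
  rw [dist_eq_norm] at hxy
  exact ⟨hstep x hx y hxy, hstep y hy x (norm_sub_rev (R x) (R y) ▸ hxy)⟩

end BoundedInverse

section QuadraticPencil

variable {K : Type*} [NormedAddCommGroup K] [InnerProductSpace ℂ K] {D : Submodule ℂ K}

local notation "⟪" x ", " y "⟫" => inner ℂ x y

theorem smul_one_le_of_forall_le_re_inner {W : K →L[ℂ] K} (hWsymm : ∀ x y, ⟪W x, y⟫ = ⟪x, W y⟫)
    {w : ℝ} (hW : ∀ x, w * ‖x‖ ^ 2 ≤ re ⟪W x, x⟫) : (w : ℂ) • 1 ≤ W := by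
  refine (ContinuousLinearMap.le_def _ _).mpr ⟨fun x y => ?_, fun x => ?_⟩
  · change ⟪W x - (w : ℂ) • x, y⟫ = ⟪x, W y - (w : ℂ) • y⟫
    rw [inner_sub_left, inner_sub_right, inner_smul_left, inner_smul_right, conj_ofReal, hWsymm]
  · change 0 ≤ re ⟪W x - (w : ℂ) • x, x⟫
    rw [inner_sub_left, inner_smul_left, conj_ofReal, sub_re, re_ofReal_mul, sub_nonneg]
    have hx : re ⟪x, x⟫ = ‖x‖ ^ 2 := inner_self_eq_norm_sq (𝕜 := ℂ) x
    exact hx ▸ hW x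

theorem exists_inner_self_eq_ofReal_of_smul_one_le {W : K →L[ℂ] K} {w : ℝ}
    (hW : (w : ℂ) • 1 ≤ W) (x : K) : ∃ r : ℝ, ⟪W x, x⟫ = r ∧ w * ‖x‖ ^ 2 ≤ r := by
  obtain ⟨hreal, hnonneg⟩ :=
    (ContinuousLinearMap.isPositive_iff_complex _).mp ((ContinuousLinearMap.le_def _ _).mp hW) x
  have hsplit : ⟪(W - (w : ℂ) • 1) x, x⟫ = ⟪W x, x⟫ - (w * ‖x‖ ^ 2 : ℝ) := by
    simp [inner_self_eq_norm_sq_to_K]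
  refine ⟨RCLike.re ⟪(W - (w : ℂ) • 1) x, x⟫ + w * ‖x‖ ^ 2, ?_, le_add_of_nonneg_left hnonneg⟩
  rw [ofReal_add, hreal, hsplit]
  ring

def quadraticPencil (P : D →ₗ[ℂ] K) (B W : K →L[ℂ] K) (z : ℂ) : D →ₗ[ℂ] K :=
  P - (((I * z) • B + z ^ 2 • W : K →L[ℂ] K) : K →ₗ[ℂ] K) ∘ₗ D.subtype

theorem quadraticPencil_apply (P : D →ₗ[ℂ] K) (B W : K →L[ℂ] K) (z : ℂ) (φ : D) :
    quadraticPencil P B W z φ = P φ - (I * z) • B φ - z ^ 2 • W φ := by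
  simp [quadraticPencil, sub_sub]

theorem mul_im_norm_le_norm_quadraticPencil {P : D →ₗ[ℂ] K}
    (hPsymm : ∀ φ ψ : D, ⟪P φ, (ψ : K)⟫ = ⟪(φ : K), P ψ⟫)
    (hPnonneg : ∀ φ : D, 0 ≤ re ⟪P φ, (φ : K)⟫)
    {B W : K →L[ℂ] K} (hB : 0 ≤ B) {w : ℝ} (hW : (w : ℂ) • 1 ≤ W) {z : ℂ} (hz : 0 ≤ z.im)
    (φ : D) : w * z.im * ‖z‖ * ‖(φ : K)‖ ≤ ‖quadraticPencil P B W z φ‖ := by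
  set T := quadraticPencil P B W z
  obtain ⟨p, hp, hp0⟩ : ∃ p : ℝ, ⟪P φ, (φ : K)⟫ = p ∧ 0 ≤ p :=
    ⟨_, (conj_eq_iff_re.mp (by rw [inner_conj_symm]; exact (hPsymm φ φ).symm)).symm, hPnonneg φ⟩
  obtain ⟨β, hβ, hβ0⟩ :=
    exists_inner_self_eq_ofReal_of_smul_one_le (w := 0) (by simpa using hB) (φ : K)
  rw [zero_mul] at hβ0
  obtain ⟨ω, hω, hωw⟩ := exists_inner_self_eq_ofReal_of_smul_one_le hW (φ : K)
  have hQ : ⟪T φ, (φ : K)⟫ = p - conj (I * z) * β - conj (z ^ 2) * ω := by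
    rw [quadraticPencil_apply, inner_sub_left, inner_sub_left, inner_smul_left, inner_smul_left,
      hp, hβ, hω]
  have hnormsq : ‖z‖ ^ 2 = z.re ^ 2 + z.im ^ 2 := by rw [Complex.sq_norm, normSq_apply]; ring
  have him : (z * ⟪T φ, (φ : K)⟫).im
      = z.im * p + ‖z‖ ^ 2 * β + z.im * ‖z‖ ^ 2 * ω := by
    rw [hQ, hnormsq]
    simp only [mul_im, mul_re, sub_im, sub_re, conj_re, conj_im, I_re, I_im, ofReal_re,
      ofReal_im, pow_two]
    ring
  have hlower : w * z.im * ‖z‖ ^ 2 * ‖(φ : K)‖ ^ 2 ≤ ‖z‖ * (‖T φ‖ * ‖(φ : K)‖) := calc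
    w * z.im * ‖z‖ ^ 2 * ‖(φ : K)‖ ^ 2 ≤ (z * ⟪T φ, (φ : K)⟫).im := by
      rw [him]
      have := mul_le_mul_of_nonneg_left hωw (by positivity : 0 ≤ z.im * ‖z‖ ^ 2)
      have : 0 ≤ z.im * p + ‖z‖ ^ 2 * β := by positivity
      linarith
    _ ≤ ‖z * ⟪T φ, (φ : K)⟫‖ := im_le_norm _
    _ ≤ ‖z‖ * (‖T φ‖ * ‖(φ : K)‖) := by
      rw [norm_mul]
      exact mul_le_mul_of_nonneg_left (norm_inner_le_norm _ _) (norm_nonneg z)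
  rcases (mul_nonneg (norm_nonneg z) (norm_nonneg (φ : K))).eq_or_lt with h0 | hpos
  · rcases mul_eq_zero.mp h0.symm with h | h <;> simp [h]
  · nlinarith

variable [CompleteSpace K]

theorem surjective_quadraticPencil {P : D →ₗ[ℂ] K}
    (hPsymm : ∀ φ ψ : D, ⟪P φ, (ψ : K)⟫ = ⟪(φ : K), P ψ⟫)
    (hPnonneg : ∀ φ : D, 0 ≤ re ⟪P φ, (φ : K)⟫)
    (hPsa : ∀ c : ℂ, c.im ≠ 0 → ∀ y : K, ∃ φ : D, P φ - c • (φ : K) = y)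
    {B W : K →L[ℂ] K} (hB : 0 ≤ B) {w : ℝ} (hw : 0 < w) (hW : (w : ℂ) • 1 ≤ W) {z : ℂ}
    (hz : 0 < z.im) : Function.Surjective (quadraticPencil P B W z) := by
  -- Deform `(1 + i, 0, w)` into `(z, B, W)`; at the start the pencil is `P - 2 i w`.
  let ζ : ℝ → ℂ := fun t => t * z + (1 - t) * (1 + I)
  let Bt : ℝ → K →L[ℂ] K := fun t => (t : ℂ) • B
  let Wt : ℝ → K →L[ℂ] K := fun t => (w : ℂ) • 1 + (t : ℂ) • (W - (w : ℂ) • 1)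
  let ν := min z.im 1
  have hν : 0 < ν := lt_min hz one_pos
  have hζ : ∀ t ∈ Set.Icc (0 : ℝ) 1, ν ≤ (ζ t).im := fun t ht => by
    have : (ζ t).im = t * z.im + (1 - t) := by simp [ζ]
    rw [this]
    nlinarith [min_le_left z.im 1, min_le_right z.im 1, ht.1, ht.2]
  have hbound : ∀ t ∈ Set.Icc (0 : ℝ) 1, ∀ φ : D,
      w * ν * ν * ‖(φ : K)‖ ≤ ‖quadraticPencil P (Bt t) (Wt t) (ζ t) φ‖ := fun t ht φ => by
    have ht0 : (0 : ℂ) ≤ t := zero_le_real.mpr ht.1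
    have hBt : 0 ≤ Bt t := (ContinuousLinearMap.nonneg_iff_isPositive _).mpr
      (((ContinuousLinearMap.nonneg_iff_isPositive _).mp hB).smul_of_nonneg ht0)
    have hWt : (w : ℂ) • 1 ≤ Wt t := by
      rw [ContinuousLinearMap.le_def, add_sub_cancel_left]
      exact ((ContinuousLinearMap.le_def _ _).mp hW).smul_of_nonneg ht0
    have hνζ : ν * ν ≤ (ζ t).im * ‖ζ t‖ :=
      mul_le_mul (hζ t ht) ((hζ t ht).trans (im_le_norm _)) hν.le (hν.le.trans (hζ t ht))
    calc w * ν * ν * ‖(φ : K)‖ = w * (ν * ν) * ‖(φ : K)‖ := by ring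
      _ ≤ w * ((ζ t).im * ‖ζ t‖) * ‖(φ : K)‖ := by gcongr
      _ = w * (ζ t).im * ‖ζ t‖ * ‖(φ : K)‖ := by ring
      _ ≤ _ := mul_im_norm_le_norm_quadraticPencil hPsymm hPnonneg hBt hWt
        (hν.le.trans (hζ t ht)) φ
  have hstart : Function.Surjective (quadraticPencil P (Bt 0) (Wt 0) (ζ 0)) := fun y => by
    obtain ⟨φ, hφ⟩ := hPsa (2 * w * I) (by simp [hw.ne']) y
    refine ⟨φ, ?_⟩
    rw [quadraticPencil_apply, ← hφ]
    have hI : (1 + I) ^ 2 = 2 * I := by ring_nf; rw [I_sq]; ring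
    simp only [Bt, Wt, ζ, ofReal_zero, zero_mul, sub_zero, one_mul, zero_add, zero_smul,
      zero_apply, smul_zero, add_zero, smul_apply, one_apply_eq_self, sub_right_inj]
    rw [smul_smul, hI, mul_right_comm]
  have := isPreconnected_Icc.surjective_sub_of_continuousOn P
    (R := fun t => (I * ζ t) • Bt t + ζ t ^ 2 • Wt t) (by fun_prop) (by positivity) hbound
    (Set.left_mem_Icc.mpr zero_le_one) (Set.right_mem_Icc.mpr zero_le_one) hstart
  simp only [Bt, Wt, ζ, ofReal_one, one_mul, sub_self, zero_mul, add_zero, one_smul,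
    add_sub_cancel] at this
  exact this

end QuadraticPencil

/-- Abstract version of the operator `P_G = -div(G∇)`: a self-adjoint nonnegative operator `P`
on the Hilbert space `K` (playing the role of `L²(ℝ^d)`) with domain `D` (playing `H²`),
together with bounded self-adjoint multiplication operators `B` (by `b ≥ 0`) and `W`
(by `w ≥ w_min > 0`).  For `z = τ + iμ` with `μ > 0`, the operator
`T(z) = P - izB - z²W` is boundedly invertible with `‖T(z)⁻¹‖ ≤ C/(μ|z|)`,
with `C` independent of `z`. -/
theorem stmt3 {K : Type*} [NormedAddCommGroup K] [InnerProductSpace ℂ K] [CompleteSpace K]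
    (D : Submodule ℂ K) (P : ↥D →ₗ[ℂ] K)
    (hsymm : ∀ φ ψ : ↥D, (inner ℂ (P φ) (ψ : K) : ℂ) = inner ℂ (φ : K) (P ψ))
    (hnonneg : ∀ φ : ↥D, 0 ≤ (inner ℂ (P φ) (φ : K) : ℂ).re)
    (hsa : ∀ z : ℂ, z.im ≠ 0 → ∀ y : K, ∃ φ : ↥D, P φ - z • (φ : K) = y)
    (B W : K →L[ℂ] K)
    (hBsa : ∀ x y : K, (inner ℂ (B x) y : ℂ) = inner ℂ x (B y))
    (hBpos : ∀ x : K, 0 ≤ (inner ℂ (B x) x : ℂ).re)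
    (hWsa : ∀ x y : K, (inner ℂ (W x) y : ℂ) = inner ℂ x (W y))
    (wmin : ℝ) (hwmin : 0 < wmin)
    (hWpos : ∀ x : K, wmin * ‖x‖ ^ 2 ≤ (inner ℂ (W x) x : ℂ).re) :
    ∃ C : ℝ, 0 ≤ C ∧ ∀ z : ℂ, 0 < z.im →
      ∃ S : K →L[ℂ] K,
        IsBoundedInverseOf D
          (P - (Complex.I * z) • ((B : K →ₗ[ℂ] K).comp D.subtype)
             - z ^ 2 • ((W : K →ₗ[ℂ] K).comp D.subtype)) S ∧
        ‖S‖ ≤ C / (z.im * ‖z‖) := by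
  have hB : 0 ≤ B := (ContinuousLinearMap.nonneg_iff_isPositive B).mpr ⟨hBsa, hBpos⟩
  have hW := smul_one_le_of_forall_le_re_inner hWsa hWpos
  refine ⟨wmin⁻¹, by positivity, fun z hz => ?_⟩
  have hpencil : P - (Complex.I * z) • ((B : K →ₗ[ℂ] K).comp D.subtype)
      - z ^ 2 • ((W : K →ₗ[ℂ] K).comp D.subtype) = quadraticPencil P B W z :=
    LinearMap.ext fun φ => (quadraticPencil_apply P B W z φ).symm
  have hz0 : 0 < ‖z‖ := norm_pos_iff.mpr fun h => by simp [h] at hz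
  obtain ⟨S, hS, hSnorm⟩ := exists_isBoundedInverseOf_of_surjective (by positivity)
    (mul_im_norm_le_norm_quadraticPencil hsymm hnonneg hB hW hz.le)
    (surjective_quadraticPencil hsymm hnonneg hsa hB hwmin hW hz)
  refine ⟨S, hpencil ▸ hS, hSnorm.trans_eq ?_⟩
  rw [mul_assoc, mul_inv, div_eq_mul_inv]
end

section
/- (No Jordan block at zero) With A⁰ as above on the torus, ker((A⁰)²) = ker(A⁰), i.e., 0 is an algebraically simple eigenvalue. Concretely: if (u,v) ∈ H²_# × H¹_# satisfies A⁰(u,v) = (α, 0) for a constant α ∈ ℂ, then integrating P_p u over the unit cell gives 0 = iα ∫_𝕋 w_p a_p dx, and since ∫_𝕋 w_p a_p > 0 it follows that α = 0 and (u,v) ∈ ker(A⁰). -/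
/-!
Since `w_p⁻¹ v = α`, the velocity is `v = α w_p`, so the second equation says that
`div(G_p∇u) = -i α a_p w_p`. The flux `G_p∇u` is `ℤ^d`-periodic, so by the divergence theorem
the left side integrates to zero over the unit cell (opposite faces cancel), whereas the right
side integrates to `-i α ∫ a_p w_p` with `∫ a_p w_p > 0`. Hence `α = 0`, and then `v = 0` and
`div(G_p∇u) = 0`.
-/

open MeasureTheory Set

theorem Function.Periodic.fderiv {E F : Type*} [NormedAddCommGroup E] [NormedSpace ℝ E]
    [NormedAddCommGroup F] [NormedSpace ℝ F] {f : E → F} {c : E} (hf : Function.Periodic f c) :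
    Function.Periodic (fderiv ℝ f) c := fun x => by
  rw [← fderiv_comp_add_right, hf.funext]

section IntPeriodic

variable {ι β : Type*}

theorem periodic_single_of_forall_int [DecidableEq ι] {f : (ι → ℝ) → β}
    (hf : ∀ (x : ι → ℝ) (n : ι → ℤ), f (x + fun i => (n i : ℝ)) = f x) (j : ι) :
    Function.Periodic f (Pi.single j 1) := fun x => by
  convert hf x (Pi.single j 1) using 3
  ext i
  simp [Pi.single_apply]

theorem apply_fract_of_forall_int {f : (ι → ℝ) → β}
    (hf : ∀ (x : ι → ℝ) (n : ι → ℤ), f (x + fun i => (n i : ℝ)) = f x) (x : ι → ℝ) :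
    f (fun i => Int.fract (x i)) = f x := by
  convert hf x (fun i => -⌊x i⌋) using 2
  ext i
  simp [Int.fract, sub_eq_add_neg]

end IntPeriodic

theorem setIntegral_Icc_pos_of_continuous {ι : Type*} [Fintype ι] {f : (ι → ℝ) → ℝ}
    {a b : ι → ℝ} (hab : ∀ i, a i < b i) (hf : Continuous f)
    (hf₀ : ∀ x ∈ Icc a b, 0 ≤ f x) {x₀ : ι → ℝ} (hx₀ : x₀ ∈ Icc a b) (hfx₀ : f x₀ ≠ 0) :
    0 < ∫ x in Icc a b, f x := by
  rw [setIntegral_pos_iff_support_of_nonneg_ae (ae_restrict_of_forall_mem measurableSet_Icc hf₀)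
    (hf.continuousOn.integrableOn_compact isCompact_Icc)]
  have hopen : IsOpen (Function.support f ∩ univ.pi fun i => Ioo (a i) (b i)) :=
    (isOpen_ne_fun hf continuous_const).inter (isOpen_set_pi finite_univ fun _ _ => isOpen_Ioo)
  have hclosure : closure (univ.pi fun i => Ioo (a i) (b i)) = Icc a b := by
    simp only [closure_pi_set, closure_Ioo (hab _).ne, pi_univ_Icc]
  have hne : (Function.support f ∩ univ.pi fun i => Ioo (a i) (b i)).Nonempty :=
    mem_closure_iff.1 (hclosure ▸ hx₀) _ (isOpen_ne_fun hf continuous_const) hfx₀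
  refine (hopen.measure_pos volume hne).trans_le (measure_mono (inter_subset_inter_right _ ?_))
  rw [← pi_univ_Icc]
  exact pi_mono fun i _ => Ioo_subset_Icc_self

theorem integral_divergence_eq_zero_of_periodic {E : Type*} [NormedAddCommGroup E]
    [NormedSpace ℝ E] [CompleteSpace E] {d : ℕ} (F : Fin d → (Fin d → ℝ) → E)
    (hF : ∀ j, ContDiff ℝ 1 (F j)) (hper : ∀ j, Function.Periodic (F j) (Pi.single j 1)) :
    ∫ x in Icc 0 1, ∑ j, fderiv ℝ (F j) x (Pi.single j 1) = 0 := by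
  cases d with
  | zero => simp
  | succ n =>
    have hdiv : Continuous fun x => ∑ j, fderiv ℝ (F j) x (Pi.single j 1) :=
      continuous_finsetSum _ fun j _ =>
        ((hF j).continuous_fderiv one_ne_zero).clm_apply continuous_const
    rw [integral_divergence_of_hasFDerivAt_off_countable' 0 1 zero_le_one F
      (fun j x => fderiv ℝ (F j) x) ∅ countable_empty (fun j => (hF j).continuous.continuousOn)
      (fun x _ j => ((hF j).differentiable one_ne_zero x).hasFDerivAt)
      (hdiv.continuousOn.integrableOn_compact isCompact_Icc)]
    refine Finset.sum_eq_zero fun i _ =>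
      sub_eq_zero.2 (setIntegral_congr_fun measurableSet_Icc fun x _ => ?_)
    have hshift : (i.insertNth 1 x : Fin (n + 1) → ℝ) = i.insertNth 0 x + Pi.single i 1 := by
      ext j
      rcases eq_or_ne j i with rfl | hne
      · simp
      · obtain ⟨k, rfl⟩ := Fin.exists_succAbove_eq hne
        simp
    rw [Pi.one_apply, Pi.zero_apply, hshift, hper]

section Flux

variable {ι : Type*} [Fintype ι] [DecidableEq ι] (G : (ι → ℝ) → ι → ι → ℝ) (u : (ι → ℝ) → ℂ)

theorem contDiff_flux (hG : ContDiff ℝ 1 G) (hu : ContDiff ℝ 2 u) (j : ι) :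
    ContDiff ℝ 1 (fun y => ∑ k, ((G y j k : ℝ) : ℂ) * fderiv ℝ u y (Pi.single k 1)) :=
  ContDiff.sum fun k _ =>
    (Complex.ofRealCLM.contDiff.comp (contDiff_pi.1 (contDiff_pi.1 hG j) k)).mul
      ((hu.fderiv_right le_rfl).clm_apply contDiff_const)

theorem periodic_flux {c : ι → ℝ} (hG : Function.Periodic G c)
    (hu : Function.Periodic u c) (j : ι) :
    Function.Periodic (fun y => ∑ k, ((G y j k : ℝ) : ℂ) * fderiv ℝ u y (Pi.single k 1)) c :=
  fun y => by simp only [hG y, hu.fderiv y]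

end Flux

theorem stmt13_general (d : ℕ)
    (Gp : (Fin d → ℝ) → Fin d → Fin d → ℝ) (wp ap : (Fin d → ℝ) → ℝ)
    (wmin : ℝ) (hwmin : 0 < wmin)
    (hGper : ∀ (x : Fin d → ℝ) (n : Fin d → ℤ), Gp (x + fun i => (n i : ℝ)) = Gp x)
    (haper : ∀ (x : Fin d → ℝ) (n : Fin d → ℤ), ap (x + fun i => (n i : ℝ)) = ap x)
    (hGsmooth : ContDiff ℝ 1 Gp)
    (hw : ∀ x, wmin ≤ wp x) (hwC : Continuous wp)
    (ha0 : ∀ x, 0 ≤ ap x) (haC : Continuous ap) (hane : ∃ x, ap x ≠ 0)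
    (u v : (Fin d → ℝ) → ℂ)
    (huper : ∀ (x : Fin d → ℝ) (n : Fin d → ℤ), u (x + fun i => (n i : ℝ)) = u x)
    (hu : ContDiff ℝ 2 u)
    (α : ℂ)
    (h1 : ∀ x, ((wp x : ℝ) : ℂ)⁻¹ * v x = α)
    (h2 : ∀ x, -(∑ j, fderiv ℝ
          (fun y => ∑ k, ((Gp y j k : ℝ) : ℂ) * fderiv ℝ u y (Pi.single k 1))
          x (Pi.single j 1))
        - Complex.I * ((ap x : ℝ) : ℂ) * v x = 0) :
    α = 0 ∧ (∀ x, v x = 0) ∧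
      (∀ x, (∑ j, fderiv ℝ
          (fun y => ∑ k, ((Gp y j k : ℝ) : ℂ) * fderiv ℝ u y (Pi.single k 1))
          x (Pi.single j 1)) = 0) := by
  have hwpos : ∀ x, 0 < wp x := fun x => hwmin.trans_le (hw x)
  have hv : ∀ x, v x = wp x * α := fun x =>
    (inv_mul_eq_iff_eq_mul₀ (Complex.ofReal_ne_zero.2 (hwpos x).ne')).1 (h1 x)
  have hdiv : ∀ x, (∑ j, fderiv ℝ
      (fun y => ∑ k, ((Gp y j k : ℝ) : ℂ) * fderiv ℝ u y (Pi.single k 1)) x (Pi.single j 1))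
      = -(Complex.I * α) * ((ap x * wp x : ℝ) : ℂ) := fun x => by
    push_cast
    linear_combination -h2 x - Complex.I * ap x * hv x
  have hflux := integral_divergence_eq_zero_of_periodic _ (contDiff_flux Gp u hGsmooth hu)
    fun j => periodic_flux Gp u (periodic_single_of_forall_int hGper j)
      (periodic_single_of_forall_int huper j) j
  simp only [hdiv, integral_const_mul, integral_complex_ofReal, mul_eq_zero, neg_eq_zero,
    Complex.I_ne_zero, false_or, Complex.ofReal_eq_zero] at hflux
  obtain ⟨x₀, hx₀⟩ := hane
  have hpos : 0 < ∫ x in Icc 0 1, ap x * wp x :=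
    setIntegral_Icc_pos_of_continuous (fun _ => zero_lt_one) (haC.mul hwC)
      (fun x _ => mul_nonneg (ha0 x) (hwpos x).le)
      (x₀ := fun i => Int.fract (x₀ i)) ⟨fun i => Int.fract_nonneg _, fun i => (Int.fract_lt_one _).le⟩
      (mul_ne_zero ((apply_fract_of_forall_int haper x₀).symm ▸ hx₀) (hwpos _).ne')
  have hα : α = 0 := hflux.resolve_right hpos.ne'
  exact ⟨hα, fun x => by simp [hv x, hα], fun x => by simp [hdiv x, hα]⟩

/-- No Jordan block at zero for the periodic damped-wave generator
`A⁰ = [[0, w_p⁻¹],[P_p, -i a_p]]`: if `(u,v)` (periodic, with the indicated regularity)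
satisfies `A⁰(u,v) = (α, 0)` for a constant `α ∈ ℂ`, then `α = 0` and `(u,v) ∈ ker A⁰`
(indeed `v = 0` and `div(G_p∇u) = 0`).  The point is that integrating `P_p u` over the
unit cell gives `0 = iα ∫_𝕋 w_p a_p`, and `∫_𝕋 w_p a_p > 0`. -/
theorem stmt13 (d : ℕ)
    (Gp : (Fin d → ℝ) → Fin d → Fin d → ℝ) (wp ap : (Fin d → ℝ) → ℝ)
    (Gmin wmin : ℝ) (hGmin : 0 < Gmin) (hwmin : 0 < wmin)
    (hGper : ∀ (x : Fin d → ℝ) (n : Fin d → ℤ), Gp (x + fun i => (n i : ℝ)) = Gp x)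
    (hwper : ∀ (x : Fin d → ℝ) (n : Fin d → ℤ), wp (x + fun i => (n i : ℝ)) = wp x)
    (haper : ∀ (x : Fin d → ℝ) (n : Fin d → ℤ), ap (x + fun i => (n i : ℝ)) = ap x)
    (hGsym : ∀ x i j, Gp x i j = Gp x j i)
    (hGell : ∀ (x ξ : Fin d → ℝ),
      Gmin * (∑ i, ξ i ^ 2) ≤ ∑ i, ∑ j, Gp x i j * ξ i * ξ j)
    (hGsmooth : ContDiff ℝ 1 Gp)
    (hw : ∀ x, wmin ≤ wp x) (hwC : Continuous wp)
    (ha0 : ∀ x, 0 ≤ ap x) (haC : Continuous ap) (hane : ∃ x, ap x ≠ 0)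
    (u v : (Fin d → ℝ) → ℂ)
    (huper : ∀ (x : Fin d → ℝ) (n : Fin d → ℤ), u (x + fun i => (n i : ℝ)) = u x)
    (hvper : ∀ (x : Fin d → ℝ) (n : Fin d → ℤ), v (x + fun i => (n i : ℝ)) = v x)
    (hu : ContDiff ℝ 2 u) (hv : Continuous v)
    (α : ℂ)
    (h1 : ∀ x, ((wp x : ℝ) : ℂ)⁻¹ * v x = α)
    (h2 : ∀ x, -(∑ j, fderiv ℝ
          (fun y => ∑ k, ((Gp y j k : ℝ) : ℂ) * fderiv ℝ u y (Pi.single k 1))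
          x (Pi.single j 1))
        - Complex.I * ((ap x : ℝ) : ℂ) * v x = 0) :
    α = 0 ∧ (∀ x, v x = 0) ∧
      (∀ x, (∑ j, fderiv ℝ
          (fun y => ∑ k, ((Gp y j k : ℝ) : ℂ) * fderiv ℝ u y (Pi.single k 1))
          x (Pi.single j 1)) = 0) :=
  stmt13_general d Gp wp ap wmin hwmin hGper haper hGsmooth hw hwC ha0 haC hane u v huper hu α h1 h2
end
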